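/- Let C be an additive subgroup of Z_{2k}^n and Φ the extended Gray map with the propelinear operation x ⋆ y = x + π_x(y) on Φ(C). Then Φ: (C, +) → (Φ(C), ⋆) is a group isomorphism; in particular x ⋆ y = Φ(Φ^{-1}(x) + Φ^{-1}(y)) for all x, y ∈ Φ(C). -/
import Mathlib


/-- The standard Gray map `ZMod (2*k) → ZMod 2 ^ k`:
`φ(i) = 0^(k-i) | 1^(i)` for `0 ≤ i ≤ k-1`, and `φ(i+k) = φ(i) + 1^(k)`. -/
def gray (k : ℕ) (i : ZMod (2 * k)) : Fin k → ZMod 2 :=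
  fun j => if i.val < k then (if k ≤ j.val + i.val then 1 else 0)
           else (if k ≤ j.val + (i.val - k) then 0 else 1)

/-- The coordinatewise extension `Φ : ZMod (2*k)^n → ZMod 2^(kn)` of the Gray map. -/
def grayExt (k n : ℕ) (c : Fin n → ZMod (2 * k)) : Fin n × Fin k → ZMod 2 :=
  fun p => gray k (c p.1) p.2

/-- The action of the permutation `π_x = (σ_{j_1} | ⋯ | σ_{j_n})` associated to
`x = Φ(j_1, …, j_n)` on binary vectors of length `kn`. -/
def actExt (k : ℕ) (hk : 0 < k) (n : ℕ) (c : Fin n → ZMod (2 * k))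
    (y : Fin n × Fin k → ZMod 2) : Fin n × Fin k → ZMod 2 :=
  fun p => y (p.1, ⟨(p.2.val + (c p.1).val) % k, Nat.mod_lt _ hk⟩)

/-- Normal form for the Gray map: `gray k i j = 1` iff `k ≤ (j + i.val) % (2k)`,
expressed as a linear-arithmetic condition. -/
lemma gray_cond (k : ℕ) (hk : 0 < k) (i : ZMod (2 * k)) (j : Fin k) :
    gray k i j = if (i.val < k ∧ k ≤ j.val + i.val) ∨ (k ≤ i.val ∧ j.val + i.val < 2 * k)
      then 1 else 0 := by
  haveI : NeZero (2 * k) := ⟨by omega⟩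
  have hi := ZMod.val_lt i
  have hj := j.isLt
  unfold gray
  split_ifs <;> first | rfl | omega

/-- The Gray map is injective. -/
lemma gray_inj (k : ℕ) (hk : 0 < k) : Function.Injective (gray k) := by
  haveI : NeZero (2 * k) := ⟨by omega⟩
  intro a b hab
  have hA := ZMod.val_lt a
  have hB := ZMod.val_lt b
  have H : ∀ m, m < k →
      (((a.val < k ∧ k ≤ m + a.val) ∨ (k ≤ a.val ∧ m + a.val < 2 * k)) ↔
       ((b.val < k ∧ k ≤ m + b.val) ∨ (k ≤ b.val ∧ m + b.val < 2 * k))) := by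
    intro m hm
    have h := congrFun hab ⟨m, hm⟩
    rw [gray_cond k hk, gray_cond k hk] at h
    split_ifs at h <;> tauto
  have hval : a.val = b.val := by
    rcases Nat.lt_or_ge a.val k with h1 | h1 <;> rcases Nat.lt_or_ge b.val k with h2 | h2
    · rcases Nat.eq_zero_or_pos a.val with hA0 | hA0 <;>
        rcases Nat.eq_zero_or_pos b.val with hB0 | hB0
      · omega
      · have := H (k - b.val) (by omega); omega
      · have := H (k - a.val) (by omega); omega
      · have := H (k - a.val) (by omega); have := H (k - b.val) (by omega); omega
    · have := H 0 hk; omega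
    · have := H 0 hk; omega
    · rcases Nat.lt_or_ge k a.val with hA0 | hA0 <;>
        rcases Nat.lt_or_ge k b.val with hB0 | hB0
      · have := H (2*k - a.val) (by omega); have := H (2*k - b.val) (by omega); omega
      · have := H (2*k - a.val) (by omega); omega
      · have := H (2*k - b.val) (by omega); omega
      · omega
  exact ZMod.val_injective _ hval

/-- The key identity: `φ(a) + σ_a(φ(b)) = φ(a + b)` coordinatewise. -/
lemma gray_add (k : ℕ) (hk : 0 < k) (a b : ZMod (2 * k)) (j : Fin k) :
    gray k a j + gray k b ⟨(j.val + a.val) % k, Nat.mod_lt _ hk⟩ = gray k (a + b) j := by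
  haveI : NeZero (2 * k) := ⟨by omega⟩
  have hA := ZMod.val_lt a
  have hB := ZMod.val_lt b
  have hj := j.isLt
  obtain ⟨q1, r1, hq1, hr1, hm1⟩ :
      ∃ q r, j.val + a.val = q * k + r ∧ r < k ∧ (j.val + a.val) % k = r :=
    ⟨(j.val + a.val) / k, (j.val + a.val) % k,
      by simpa [Nat.mul_comm] using (Nat.div_add_mod (j.val + a.val) k).symm,
      Nat.mod_lt _ hk, rfl⟩
  obtain ⟨q2, r2, hq2, hr2, hm2⟩ :
      ∃ q r, a.val + b.val = q * (2 * k) + r ∧ r < 2 * k ∧ (a.val + b.val) % (2 * k) = r :=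
    ⟨(a.val + b.val) / (2 * k), (a.val + b.val) % (2 * k),
      by simpa [Nat.mul_comm] using (Nat.div_add_mod (a.val + b.val) (2 * k)).symm,
      Nat.mod_lt _ (by omega), rfl⟩
  have hq1lt : q1 < 3 := by
    rcases Nat.lt_or_ge q1 3 with h | h
    · exact h
    · have : 3 * k ≤ q1 * k := Nat.mul_le_mul_right _ h
      omega
  have hq2lt : q2 < 2 := by
    rcases Nat.lt_or_ge q2 2 with h | h
    · exact h
    · have : 2 * (2 * k) ≤ q2 * (2 * k) := Nat.mul_le_mul_right _ h
      omega
  rw [gray_cond k hk, gray_cond k hk, gray_cond k hk]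
  have hab : (a + b).val = (a.val + b.val) % (2 * k) := ZMod.val_add a b
  simp only [hab, hm2, hm1, Fin.val_mk]
  interval_cases q1 <;> interval_cases q2 <;>
    split_ifs <;> first | rfl | decide | (exfalso; omega)

theorem grayExt_group_isomorphism (k n : ℕ) (hk : 0 < k)
    (C : AddSubgroup (Fin n → ZMod (2 * k))) :
    Set.InjOn (grayExt k n) (C : Set (Fin n → ZMod (2 * k))) ∧
    (∀ c ∈ C, ∀ c' ∈ C,
      grayExt k n c + actExt k hk n c (grayExt k n c') = grayExt k n (c + c')) := by
  constructor
  · intro c _ c' _ h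
    funext i
    exact gray_inj k hk (funext fun j => congrFun h (i, j))
  · intro c _ c' _
    funext p
    show grayExt k n c p + actExt k hk n c (grayExt k n c') p = grayExt k n (c + c') p
    simpa [grayExt, actExt] using gray_add k hk (c p.1) (c' p.1) p.2
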